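/- Let 0 < a ≤ e^{−1}, let φ : (0,a] → (0,∞) be a concave index function (continuous, monotonically increasing, φ(λ) → 0 as λ → 0⁺), ρ > 0, and ‖T*T‖ ≤ a. Let x† = φ(T*T)w with ‖w‖ ≤ ρ. For ε ∈ (0,1/2) define Θ_ε(λ) = λ^{1/2−ε}·φ(λ). Then there exist C > 0 and δ̄ > 0 such that for every δ ∈ (0, min(δ̄, Θ(a))] with Θ(λ) = √λ·φ(λ), every y^δ ∈ Y with ‖y^δ − T x†‖ ≤ δ, and every α ∈ (0,a] with Θ_ε(α) = δ, the regularized solution x(δ) = g_α(T*T)T*y^δ satisfies ‖x† − x(δ)‖ ≤ C · α^{−ε} · φ(α). -/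

import Mathlib

open ContinuousLinearMap

/-- The generator function `g_α(λ) = 1/(λ + (1 − λ^{√α})²)` with `g_α(0) = 1`,
where `λ^{√α} = exp(√α · log λ)`. -/
noncomputable def genFun (α : ℝ) : ℝ → ℝ := fun t =>
  if t = 0 then 1 else 1 / (t + (1 - Real.exp (Real.sqrt α * Real.log t)) ^ 2)

/-!
With `A = T*T` and the residual `r_α(λ) = 1 - λ g_α(λ)`, the error splits as
`x† - x(δ) = r_α(A) φ(A) w + g_α(A) T* (T x† - y^δ)`.

On `σ(A) ⊆ [0, a]` we have `0 ≤ r_α ≤ 1`, and for `λ ≥ α` also `r_α(λ) ≤ α log² α / λ`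
because `1 - λ^{√α} ≤ √α |log λ|`; concavity gives `φ(λ)/λ ≤ φ(α)/α`. Hence the first term is at
most `(1 + log² α) φ(α) ρ ≤ (1 + 2/ε²) α^{-ε} φ(α) ρ`.

For the second term, `‖g_α(A) T*‖² = ‖λ g_α(λ)²‖_{σ(A)}`, and `λ ≤ e⁻¹` forces
`1 - λ^{√α} ≥ e⁻¹ √α`, so `λ g_α(λ)² ≤ e² / (4α)`. The term is therefore at most
`(e/2) α^{-1/2} δ = (e/2) α^{-ε} φ(α)`.
-/

open Set Filter Topology Real

theorem ContinuousOn.Icc_of_Ioc {α β : Type*} [LinearOrder α] [TopologicalSpace α] [T1Space α]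
    [TopologicalSpace β] {f : α → β} {a b : α} (hf : ContinuousOn f (Ioc a b))
    (ha : ContinuousWithinAt f (Ioi a) a) : ContinuousOn f (Icc a b) := by
  intro t ht
  rw [← Ioc_insert_left (ht.1.trans ht.2), continuousWithinAt_insert]
  rcases ht.1.eq_or_lt with rfl | hat
  · exact ha.mono Ioc_subset_Ioi_self
  · exact hf t ⟨hat, ht.2⟩

theorem ConcaveOn.antitoneOn_div_Ioc {f : ℝ → ℝ} {a : ℝ} (hf : ConcaveOn ℝ (Ioc 0 a) f)
    (hf₀ : ∀ x ∈ Ioc 0 a, 0 ≤ f x) : AntitoneOn (fun x => f x / x) (Ioc 0 a) := by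
  intro s hs t ht hst
  rcases hst.eq_or_lt with rfl | hst
  · rfl
  -- `0 ∉ Ioc 0 a`: compare with the slopes from points `u ↓ 0`, where `f u ≥ 0`.
  have hslope : ∀ u ∈ Ioo 0 s, (f t - f s) / (t - s) ≤ f s / (s - u) := fun u hu =>
    (hf.slope_anti_adjacent ⟨hu.1, hu.2.le.trans hs.2⟩ ht hu.2 hst).trans
      (div_le_div_of_nonneg_right (by linarith [hf₀ u ⟨hu.1, hu.2.le.trans hs.2⟩])
        (sub_pos.2 hu.2).le)
  have hlim : Tendsto (fun u => f s / (s - u)) (𝓝[>] 0) (𝓝 (f s / s)) := by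
    refine tendsto_nhdsWithin_of_tendsto_nhds ?_
    have hcont : ContinuousAt (fun u => f s / (s - u)) 0 := by
      fun_prop (disch := simpa using hs.1.ne')
    simpa using hcont.tendsto
  have hslope₀ : (f t - f s) / (t - s) ≤ f s / s :=
    ge_of_tendsto hlim (eventually_of_mem (Ioo_mem_nhdsGT hs.1) hslope)
  rw [div_le_div_iff₀ (sub_pos.2 hst) hs.1] at hslope₀
  rw [div_le_div_iff₀ ht.1 hs.1]
  nlinarith

namespace Real

theorem exp_neg_one_mul_le_one_sub_exp_neg {x : ℝ} (hx₀ : 0 ≤ x) (hx₁ : x ≤ 1) :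
    exp (-1) * x ≤ 1 - exp (-x) := by
  have h₁ : exp (-x) * (exp x - 1) = 1 - exp (-x) := by
    rw [mul_sub, mul_one, ← exp_add, neg_add_cancel, exp_zero]
  have h₂ : exp (-1) ≤ exp (-x) := exp_le_exp.mpr (by linarith)
  nlinarith [add_one_le_exp x, exp_pos (-x), exp_pos (-1)]

theorem log_sq_le_rpow_neg {ε x : ℝ} (hε : 0 < ε) (hx₀ : 0 < x) (hx₁ : x ≤ 1) :
    log x ^ 2 ≤ 2 / ε ^ 2 * x ^ (-ε) := by
  have hu : 0 ≤ -ε * log x := mul_nonneg_of_nonpos_of_nonpos (by linarith) (log_nonpos hx₀.le hx₁)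
  have h := pow_div_factorial_le_exp _ hu 2
  rw [rpow_def_of_pos hx₀, div_mul_eq_mul_div, le_div_iff₀ (by positivity)]
  norm_num [Nat.factorial] at h
  rw [show log x * -ε = -(ε * log x) by ring]
  nlinarith

end Real

theorem genFun_of_nonneg {α t : ℝ} (hα : 0 < α) (ht : 0 ≤ t) :
    genFun α t = 1 / (t + (1 - t ^ √α) ^ 2) := by
  rcases ht.eq_or_lt with rfl | ht
  · simp [genFun, zero_rpow (sqrt_pos.2 hα).ne']
  · simp only [genFun, if_neg ht.ne', rpow_def_of_pos ht, mul_comm]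

theorem genFun_denom_pos {α t : ℝ} (hα : 0 < α) (ht : 0 ≤ t) : 0 < t + (1 - t ^ √α) ^ 2 := by
  rcases ht.eq_or_lt with rfl | ht
  · simp [zero_rpow (sqrt_pos.2 hα).ne']
  · positivity

theorem continuousOn_genFun {α : ℝ} (hα : 0 < α) : ContinuousOn (genFun α) (Ici 0) := by
  refine ContinuousOn.congr ?_ fun t ht => genFun_of_nonneg hα ht
  refine continuousOn_const.div ?_ fun t ht => (genFun_denom_pos hα ht).ne'
  exact (continuousOn_id.add ((continuousOn_const.sub
    (continuous_rpow_const (sqrt_nonneg α)).continuousOn).pow 2))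

theorem one_sub_genFun_mul {α t : ℝ} (hα : 0 < α) (ht : 0 ≤ t) :
    1 - genFun α t * t = (1 - t ^ √α) ^ 2 / (t + (1 - t ^ √α) ^ 2) := by
  have := genFun_denom_pos hα ht
  rw [genFun_of_nonneg hα ht]
  field_simp
  ring

theorem one_sub_genFun_mul_le {α t : ℝ} (hα : 0 < α) (hαt : α ≤ t) (ht : t ≤ 1) :
    1 - genFun α t * t ≤ α * log α ^ 2 / t := by
  have ht₀ : 0 < t := hα.trans_le hαt
  have hpow : 1 - t ^ √α ≤ -(log α * √α) := by
    have := add_one_le_exp (log t * √α)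
    rw [← rpow_def_of_pos ht₀] at this
    nlinarith [log_le_log hα hαt, sqrt_nonneg α]
  have hsq : (1 - t ^ √α) ^ 2 ≤ α * log α ^ 2 := by
    calc (1 - t ^ √α) ^ 2 ≤ (-(log α * √α)) ^ 2 :=
          pow_le_pow_left₀ (sub_nonneg.2 (rpow_le_one ht₀.le ht (sqrt_nonneg α))) hpow 2
      _ = α * log α ^ 2 := by rw [neg_sq, mul_pow, sq_sqrt hα.le, mul_comm]
  rw [one_sub_genFun_mul hα ht₀.le]
  calc (1 - t ^ √α) ^ 2 / (t + (1 - t ^ √α) ^ 2) ≤ (1 - t ^ √α) ^ 2 / t := by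
        gcongr; exact le_add_of_nonneg_right (sq_nonneg _)
    _ ≤ α * log α ^ 2 / t := by gcongr

theorem mul_genFun_sq_le {α t : ℝ} (hα₀ : 0 < α) (hα₁ : α ≤ 1) (ht₀ : 0 ≤ t)
    (ht₁ : t ≤ exp (-1)) :
    t * genFun α t ^ 2 ≤ (exp 1 / (2 * √α)) ^ 2 := by
  rcases ht₀.eq_or_lt with rfl | ht₀
  · simp only [zero_mul]; positivity
  have hpow : t ^ √α ≤ exp (-√α) := by
    rw [rpow_def_of_pos ht₀, exp_le_exp]
    nlinarith [log_le_log ht₀ ht₁, log_exp (-1), sqrt_nonneg α]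
  have hlow : exp (-1) * √α ≤ 1 - t ^ √α :=
    (exp_neg_one_mul_le_one_sub_exp_neg (sqrt_nonneg α) (sqrt_le_one.2 hα₁)).trans (by linarith)
  set c := exp (-1) * √α
  set d := (1 - t ^ √α) ^ 2
  have hc : 0 < c := by positivity
  have hcd : c ^ 2 ≤ d := pow_le_pow_left₀ hc.le hlow 2
  have hconst : (exp 1 / (2 * √α)) ^ 2 = 1 / (4 * c ^ 2) := by
    have : exp 1 * exp (-1) = 1 := by rw [← exp_add]; simp
    simp only [c]
    field_simp
    linear_combination (4 * (exp 1 * exp (-1)) + 4) * this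
  rw [genFun_of_nonneg hα₀ ht₀.le, hconst, div_pow, one_pow, mul_one_div,
    div_le_div_iff₀ (by positivity) (by positivity)]
  nlinarith [sq_nonneg (t - d), mul_le_mul_of_nonneg_left hcd ht₀.le]

theorem abs_one_sub_genFun_mul_mul_le {a α t : ℝ} {φ : ℝ → ℝ} (ha : a ≤ 1)
    (hmono : MonotoneOn φ (Ioc 0 a)) (hconc : ConcaveOn ℝ (Ioc 0 a) φ)
    (hpos : ∀ x ∈ Ioc 0 a, 0 < φ x) (hφ₀ : φ 0 = 0) (hα : α ∈ Ioc 0 a) (ht : t ∈ Icc 0 a) :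
    |(1 - genFun α t * t) * φ t| ≤ (1 + log α ^ 2) * φ α := by
  have hφα := (hpos α hα).le
  rcases ht.1.eq_or_lt with rfl | ht₀
  · rw [hφ₀, mul_zero, abs_zero]; positivity
  have ht' : t ∈ Ioc 0 a := ⟨ht₀, ht.2⟩
  have hden := genFun_denom_pos hα.1 ht.1
  have hres : 0 ≤ 1 - genFun α t * t ∧ 1 - genFun α t * t ≤ 1 := by
    rw [one_sub_genFun_mul hα.1 ht.1]
    exact ⟨by positivity, (div_le_one hden).2 (le_add_of_nonneg_left ht.1)⟩
  rw [abs_of_nonneg (mul_nonneg hres.1 (hpos t ht').le)]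
  rcases le_total t α with htα | hαt
  · calc (1 - genFun α t * t) * φ t ≤ 1 * φ α :=
          mul_le_mul hres.2 (hmono ht' hα htα) (hpos t ht').le zero_le_one
      _ ≤ (1 + log α ^ 2) * φ α := by gcongr; exact le_add_of_nonneg_right (sq_nonneg _)
  · calc (1 - genFun α t * t) * φ t ≤ α * log α ^ 2 / t * φ t :=
          mul_le_mul_of_nonneg_right (one_sub_genFun_mul_le hα.1 hαt (ht.2.trans ha))
            (hpos t ht').le
      _ = log α ^ 2 * α * (φ t / t) := by ring
      _ ≤ log α ^ 2 * α * (φ α / α) := mul_le_mul_of_nonneg_left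
          (hconc.antitoneOn_div_Ioc (fun x hx => (hpos x hx).le) hα ht' hαt)
          (mul_nonneg (sq_nonneg _) hα.1.le)
      _ = log α ^ 2 * φ α := by field_simp [hα.1.ne']
      _ ≤ (1 + log α ^ 2) * φ α := by gcongr; exact le_add_of_nonneg_left zero_le_one

section Operator

variable {X Y : Type*} [NormedAddCommGroup X] [InnerProductSpace ℂ X] [CompleteSpace X]
  [NormedAddCommGroup Y] [InnerProductSpace ℂ Y] [CompleteSpace Y]

theorem spectrum_subset_Icc_of_nonneg {A : Type*} [CStarAlgebra A] [PartialOrder A]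
    [StarOrderedRing A] {a : A} (ha : 0 ≤ a) {r : ℝ} (hr : ‖a‖ ≤ r) :
    spectrum ℝ a ⊆ Icc 0 r := fun t ht =>
  ⟨spectrum_nonneg_of_nonneg ha ht,
    (le_algebraMap_iff_spectrum_le (IsSelfAdjoint.of_nonneg ha)).mp
      ((CStarAlgebra.norm_le_iff_le_algebraMap a ((norm_nonneg a).trans hr) ha).mp hr) t ht⟩

theorem norm_cfc_comp_adjoint_sq (T : X →L[ℂ] Y) {g : ℝ → ℝ}
    (hg : ContinuousOn g (spectrum ℝ (adjoint T ∘L T))) :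
    ‖cfc g (adjoint T ∘L T) ∘L adjoint T‖ ^ 2 =
      ‖cfc (fun t => t * g t ^ 2) (adjoint T ∘L T)‖ := by
  set A := adjoint T ∘L T
  set G := cfc g A
  have hG : adjoint G = G := isSelfAdjoint_iff'.mp (cfc_predicate g A)
  have hA : IsSelfAdjoint A := (isPositive_adjoint_comp_self T).isSelfAdjoint
  have hGAG : cfc (fun t => t * g t ^ 2) A = G * (A * G) := by
    rw [show (fun t => t * g t ^ 2) = fun t => g t * (t * g t) by ext; ring,
      cfc_mul g (fun t => t * g t) A hg ((continuousOn_id' _).mul hg),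
      cfc_mul (fun t => t) g A (continuousOn_id' _) hg, cfc_id' ℝ A]
  calc ‖G ∘L adjoint T‖ ^ 2 = ‖adjoint (G ∘L adjoint T)‖ * ‖adjoint (G ∘L adjoint T)‖ := by
        rw [LinearIsometryEquiv.norm_map, sq]
    _ = ‖G * (A * G)‖ := by
        rw [← norm_adjoint_comp_self, adjoint_adjoint, adjoint_comp, adjoint_adjoint, hG]; rfl
    _ = _ := by rw [hGAG]

theorem cfc_apply_sub_cfc_adjoint_apply (T : X →L[ℂ] Y) {f g : ℝ → ℝ}
    (hf : ContinuousOn f (spectrum ℝ (adjoint T ∘L T)))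
    (hg : ContinuousOn g (spectrum ℝ (adjoint T ∘L T))) (w : X) (y : Y) :
    cfc f (adjoint T ∘L T) w - cfc g (adjoint T ∘L T) (adjoint T y) =
      cfc (fun t => (1 - g t * t) * f t) (adjoint T ∘L T) w +
        cfc g (adjoint T ∘L T) (adjoint T (T (cfc f (adjoint T ∘L T) w) - y)) := by
  set A := adjoint T ∘L T
  have hA : IsSelfAdjoint A := (isPositive_adjoint_comp_self T).isSelfAdjoint
  have hgt : ContinuousOn (fun t => g t * t) (spectrum ℝ A) := hg.mul (continuousOn_id' _)
  have hres : cfc (fun t => (1 - g t * t) * f t) A = cfc f A - cfc g A * A * cfc f A := by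
    rw [cfc_mul (fun t => 1 - g t * t) f A (continuousOn_const.sub hgt) hf,
      cfc_sub (fun _ => 1) (fun t => g t * t) A continuousOn_const hgt,
      cfc_const_one ℝ A, cfc_mul g (fun t => t) A hg (continuousOn_id' _), cfc_id' ℝ A, sub_mul,
      one_mul]
  rw [hres, map_sub, map_sub, sub_apply,
    show (cfc g A * A * cfc f A) w = cfc g A (adjoint T (T (cfc f A w))) from rfl]
  abel

theorem norm_cfc_genFun_adjoint_apply_le (T : X →L[ℂ] Y) {α : ℝ} (hα₀ : 0 < α) (hα₁ : α ≤ 1)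
    (hT : ‖adjoint T ∘L T‖ ≤ exp (-1)) (y : Y) :
    ‖cfc (genFun α) (adjoint T ∘L T) (adjoint T y)‖ ≤ exp 1 / (2 * √α) * ‖y‖ := by
  have hspec := spectrum_subset_Icc_of_nonneg
    ((nonneg_iff_isPositive _).mpr (isPositive_adjoint_comp_self T)) hT
  have hg := (continuousOn_genFun hα₀).mono (hspec.trans Icc_subset_Ici_self)
  have hsq : ‖cfc (genFun α) (adjoint T ∘L T) ∘L adjoint T‖ ^ 2 ≤ (exp 1 / (2 * √α)) ^ 2 := by
    rw [norm_cfc_comp_adjoint_sq T hg]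
    refine norm_cfc_le (by positivity) fun t ht => ?_
    obtain ⟨ht₀, ht₁⟩ := hspec ht
    rw [Real.norm_of_nonneg (by positivity)]
    exact mul_genFun_sq_le hα₀ hα₁ ht₀ ht₁
  exact le_of_opNorm_le _
    ((pow_le_pow_iff_left₀ (norm_nonneg _) (by positivity) two_ne_zero).mp hsq) y

end Operator

theorem stmt14_general {X Y : Type*} [NormedAddCommGroup X] [InnerProductSpace ℂ X]
    [CompleteSpace X] [NormedAddCommGroup Y] [InnerProductSpace ℂ Y] [CompleteSpace Y]
    (T : X →L[ℂ] Y)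
    (a : ℝ) (ha1 : a ≤ Real.exp (-1))
    (hTnorm : ‖(adjoint T) ∘L T‖ ≤ a)
    (phi : ℝ → ℝ)
    (hcont : ContinuousOn phi (Set.Ioc 0 a))
    (hmono : MonotoneOn phi (Set.Ioc 0 a))
    (hconc : ConcaveOn ℝ (Set.Ioc 0 a) phi)
    (hpos : ∀ lam ∈ Set.Ioc (0 : ℝ) a, 0 < phi lam)
    (hlim : Filter.Tendsto phi (nhdsWithin 0 (Set.Ioi 0)) (nhds 0))
    (hphi0 : phi 0 = 0)
    (ρ : ℝ) (hρ : 0 < ρ)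
    (w : X) (hw : ‖w‖ ≤ ρ) (xdag : X) (hxdag : xdag = cfc phi ((adjoint T) ∘L T) w) :
    ∀ ε ∈ Set.Ioo (0 : ℝ) (1 / 2), ∃ C > (0 : ℝ), ∃ δbar > (0 : ℝ),
      ∀ δ : ℝ, 0 < δ → δ ≤ min δbar (Real.sqrt a * phi a) → ∀ yδ : Y,
        ‖yδ - T xdag‖ ≤ δ → ∀ α ∈ Set.Ioc (0 : ℝ) a,
          α ^ ((1 : ℝ) / 2 - ε) * phi α = δ →
          ‖xdag - cfc (genFun α) ((adjoint T) ∘L T) ((adjoint T) yδ)‖ ≤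
            C * α ^ (-ε) * phi α := by
  rintro ε ⟨hε, -⟩
  refine ⟨ρ * (1 + 2 / ε ^ 2) + exp 1 / 2, by positivity, 1, one_pos, ?_⟩
  rintro δ - - yδ hyδ α ⟨hα₀, hαa⟩ hδ
  have ha₁ : a ≤ 1 := ha1.trans (exp_le_one_iff.2 (by norm_num))
  have hα₁ : α ≤ 1 := hαa.trans ha₁
  have hφα : 0 < phi α := hpos α ⟨hα₀, hαa⟩
  have hspec : spectrum ℝ (adjoint T ∘L T) ⊆ Icc 0 a := spectrum_subset_Icc_of_nonneg
    ((nonneg_iff_isPositive _).mpr (isPositive_adjoint_comp_self T)) hTnorm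
  have hφ : ContinuousOn phi (spectrum ℝ (adjoint T ∘L T)) :=
    (hcont.Icc_of_Ioc (by rwa [ContinuousWithinAt, hphi0])).mono hspec
  have hg : ContinuousOn (genFun α) (spectrum ℝ (adjoint T ∘L T)) :=
    (continuousOn_genFun hα₀).mono (hspec.trans Icc_subset_Ici_self)
  have happrox : ‖cfc (fun t => (1 - genFun α t * t) * phi t) (adjoint T ∘L T) w‖ ≤
      (1 + log α ^ 2) * phi α * ρ :=
    (le_of_opNorm_le _ (norm_cfc_le (mul_nonneg (by positivity) hφα.le) fun t ht =>
      abs_one_sub_genFun_mul_mul_le ha₁ hmono hconc hpos hphi0 ⟨hα₀, hαa⟩ (hspec ht)) w).trans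
      (by gcongr)
  have hdata : ‖cfc (genFun α) (adjoint T ∘L T) (adjoint T (T xdag - yδ))‖ ≤
      exp 1 / 2 * α ^ (-ε) * phi α := by
    calc _ ≤ exp 1 / (2 * √α) * δ :=
          (norm_cfc_genFun_adjoint_apply_le T hα₀ hα₁ (hTnorm.trans ha1) _).trans
            (by rw [norm_sub_rev]; gcongr)
      _ = exp 1 / 2 * α ^ (-ε) * phi α := by
          rw [← hδ, sqrt_eq_rpow, sub_eq_add_neg, rpow_add hα₀]
          field_simp
  have hlog : 1 + log α ^ 2 ≤ (1 + 2 / ε ^ 2) * α ^ (-ε) := by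
    have := one_le_rpow_of_pos_of_le_one_of_nonpos hα₀ hα₁ (neg_nonpos.2 hε.le)
    linarith [log_sq_le_rpow_neg hε hα₀ hα₁]
  rw [hxdag, cfc_apply_sub_cfc_adjoint_apply T hφ hg, ← hxdag]
  calc _ ≤ _ := norm_add_le _ _
    _ ≤ (1 + log α ^ 2) * phi α * ρ + exp 1 / 2 * α ^ (-ε) * phi α := add_le_add happrox hdata
    _ ≤ (1 + 2 / ε ^ 2) * α ^ (-ε) * phi α * ρ + exp 1 / 2 * α ^ (-ε) * phi α := by gcongr
    _ = (ρ * (1 + 2 / ε ^ 2) + exp 1 / 2) * α ^ (-ε) * phi α := by ring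

/-- Let `0 < a ≤ e⁻¹`, let `φ : (0,a] → (0,∞)` be a concave index function
(continuous, monotonically increasing, `φ(λ) → 0` as `λ → 0⁺`, extended by `φ(0)=0`),
`ρ > 0`, and let `T` be a bounded injective operator between complex Hilbert spaces
with `‖T*T‖ ≤ a`. Let `x† = φ(T*T)w` with `‖w‖ ≤ ρ`. For `ε ∈ (0,1/2)` define
`Θ_ε(λ) = λ^{1/2−ε}·φ(λ)` and `Θ(λ) = √λ·φ(λ)`. Then there exist `C > 0` and
`δ̄ > 0` such that for every `δ ∈ (0, min(δ̄, Θ(a))]`, every `y^δ` with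
`‖y^δ − T x†‖ ≤ δ`, and every `α ∈ (0,a]` with `Θ_ε(α) = δ`, the regularized
solution `x(δ) = g_α(T*T)T*y^δ` satisfies `‖x† − x(δ)‖ ≤ C · α^{−ε} · φ(α)`. -/
theorem stmt14 {X Y : Type*} [NormedAddCommGroup X] [InnerProductSpace ℂ X]
    [CompleteSpace X] [NormedAddCommGroup Y] [InnerProductSpace ℂ Y] [CompleteSpace Y]
    (T : X →L[ℂ] Y) (hTinj : Function.Injective T)
    (a : ℝ) (ha0 : 0 < a) (ha1 : a ≤ Real.exp (-1))
    (hTnorm : ‖(adjoint T) ∘L T‖ ≤ a)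
    (phi : ℝ → ℝ)
    (hcont : ContinuousOn phi (Set.Ioc 0 a))
    (hmono : MonotoneOn phi (Set.Ioc 0 a))
    (hconc : ConcaveOn ℝ (Set.Ioc 0 a) phi)
    (hpos : ∀ lam ∈ Set.Ioc (0 : ℝ) a, 0 < phi lam)
    (hlim : Filter.Tendsto phi (nhdsWithin 0 (Set.Ioi 0)) (nhds 0))
    (hphi0 : phi 0 = 0)
    (ρ : ℝ) (hρ : 0 < ρ)
    (w : X) (hw : ‖w‖ ≤ ρ) (xdag : X) (hxdag : xdag = cfc phi ((adjoint T) ∘L T) w) :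
    ∀ ε ∈ Set.Ioo (0 : ℝ) (1 / 2), ∃ C > (0 : ℝ), ∃ δbar > (0 : ℝ),
      ∀ δ : ℝ, 0 < δ → δ ≤ min δbar (Real.sqrt a * phi a) → ∀ yδ : Y,
        ‖yδ - T xdag‖ ≤ δ → ∀ α ∈ Set.Ioc (0 : ℝ) a,
          α ^ ((1 : ℝ) / 2 - ε) * phi α = δ →
          ‖xdag - cfc (genFun α) ((adjoint T) ∘L T) ((adjoint T) yδ)‖ ≤
            C * α ^ (-ε) * phi α :=
  stmt14_general T a ha1 hTnorm phi hcont hmono hconc hpos hlim hphi0 ρ hρ w hw xdag hxdag
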